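/- Let W be a real m × n matrix, b ∈ ℝᵐ, q̄ ∈ ℝⁿ, and r > 0. Suppose q ∈ ℝⁿ and Ψ ∈ ℝᵐ satisfy the decoupled position-correction equations of the Gear-Gupta-Leimkuhler timestepping scheme: q = q̄ + Wᵀ Ψ, and Ψᵢ = max(Ψᵢ − r·(W q + b)ᵢ, 0) for every i ∈ {1, …, m}. Then q is the Euclidean projection of q̄ onto the polyhedron S = {x ∈ ℝⁿ : (W x + b)ᵢ ≥ 0 for all i}; that is, q ∈ S and ‖q − q̄‖ ≤ ‖x − q̄‖ for every x ∈ S. -/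

import Mathlib

/-!
The fixed-point equation `Ψᵢ = max (Ψᵢ - r gᵢ) 0` with `r > 0` encodes the complementarity
conditions `0 ≤ gᵢ`, `0 ≤ Ψᵢ`, `Ψᵢ gᵢ = 0` for the gap `g = W q + b`. Hence `q` is feasible and,
as `q - q̄ = Wᵀ Ψ`, for every feasible `x` we get `⟪x - q, q - q̄⟫ = Ψ ⬝ (W x + b) - Ψ ⬝ (W q + b)
= Ψ ⬝ (W x + b) ≥ 0`. This is the variational inequality characterising the projection onto `S`.
-/

open Matrix

theorem nonneg_and_mul_eq_zero_of_eq_max_sub {ψ g r : ℝ} (hr : 0 < r)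
    (h : ψ = max (ψ - r * g) 0) : 0 ≤ g ∧ 0 ≤ ψ ∧ ψ * g = 0 := by
  have hg : 0 ≤ g := by
    have : ψ - r * g ≤ ψ := (le_max_left _ _).trans h.ge
    exact nonneg_of_mul_nonneg_right (by linarith) hr
  refine ⟨hg, (le_max_right _ _).trans h.ge, ?_⟩
  rcases hg.eq_or_lt with hg0 | hgpos
  · rw [← hg0, mul_zero]
  rcases max_eq_iff.mp h.symm with ⟨hfix, -⟩ | ⟨hψ, -⟩
  · nlinarith
  · rw [← hψ, zero_mul]

theorem norm_sub_le_norm_sub_of_inner_nonneg {F : Type*} [SeminormedAddCommGroup F]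
    [InnerProductSpace ℝ F] {p q x : F} (h : 0 ≤ inner ℝ (x - q) (q - p)) :
    ‖q - p‖ ≤ ‖x - p‖ := by
  have hsq : ‖q - p‖ ^ 2 ≤ ‖x - p‖ ^ 2 := by
    calc ‖q - p‖ ^ 2 ≤ ‖x - q‖ ^ 2 + 2 * inner ℝ (x - q) (q - p) + ‖q - p‖ ^ 2 := by
          nlinarith [sq_nonneg ‖x - q‖]
      _ = ‖x - p‖ ^ 2 := by rw [← norm_add_sq_real, sub_add_sub_cancel]
  exact (pow_le_pow_iff_left₀ (norm_nonneg _) (norm_nonneg _) two_ne_zero).mp hsq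

theorem inner_sub_toLp_transpose_mulVec {ι κ : Type*} [Fintype ι] [Fintype κ]
    (W : Matrix κ ι ℝ) (b : κ → ℝ) (x q : EuclideanSpace ℝ ι) (ψ : κ → ℝ) :
    inner ℝ (x - q) (WithLp.toLp 2 (Wᵀ *ᵥ ψ)) =
      ψ ⬝ᵥ (W *ᵥ x.ofLp + b) - ψ ⬝ᵥ (W *ᵥ q.ofLp + b) := by
  rw [EuclideanSpace.inner_eq_star_dotProduct, star_trivial, mulVec_transpose,
    ← dotProduct_mulVec, ← dotProduct_sub, add_sub_add_right_eq_sub, ← mulVec_sub]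
  rfl

/-- If `q = q̄ + Wᵀ Ψ` and `Ψᵢ = max (Ψᵢ - r * (W q + b)ᵢ) 0` for all `i`
(the decoupled GGL position-correction equations), then `q` is the Euclidean
projection of `q̄` onto the polyhedron `S = {x | W x + b ≥ 0}`: it lies in `S`
and minimizes the Euclidean distance to `q̄` among all points of `S`. -/
theorem ggl_position_correction_is_projection (m n : ℕ)
    (W : Matrix (Fin m) (Fin n) ℝ) (b : Fin m → ℝ)
    (qbar q : EuclideanSpace ℝ (Fin n)) (Ψ : Fin m → ℝ) (r : ℝ) (hr : 0 < r)
    (hq : q = qbar + (WithLp.equiv 2 (Fin n → ℝ)).symm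
        (W.transpose.mulVec Ψ))
    (hΨ : ∀ i, Ψ i =
        max (Ψ i - r * (W.mulVec (WithLp.equiv 2 (Fin n → ℝ) q) + b) i) 0) :
    (∀ i, 0 ≤ (W.mulVec (WithLp.equiv 2 (Fin n → ℝ) q) + b) i) ∧
      ∀ x : EuclideanSpace ℝ (Fin n),
        (∀ i, 0 ≤ (W.mulVec (WithLp.equiv 2 (Fin n → ℝ) x) + b) i) →
          ‖q - qbar‖ ≤ ‖x - qbar‖ := by
  have hcomp := fun i => nonneg_and_mul_eq_zero_of_eq_max_sub hr (hΨ i)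
  refine ⟨fun i => (hcomp i).1, fun x hx => norm_sub_le_norm_sub_of_inner_nonneg ?_⟩
  have hstep : q - qbar = WithLp.toLp 2 (Wᵀ *ᵥ Ψ) := by rw [hq, add_sub_cancel_left]; rfl
  have hslack : Ψ ⬝ᵥ (W *ᵥ q.ofLp + b) = 0 := Finset.sum_eq_zero fun i _ => (hcomp i).2.2
  rw [hstep, inner_sub_toLp_transpose_mulVec W b, hslack, sub_zero]
  exact dotProduct_nonneg_of_nonneg (fun i => (hcomp i).2.1) hx
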